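/- Let n be a positive integer and p ∈ ℝ[t]. If p_{(r,k)} ∈ 𝒫₁ for every k ∈ {1,…,n} and every r ∈ {0,…,k−1}, then p(A) is entrywise nonnegative for every entrywise nonnegative n-by-n monomial matrix A; that is, p ∈ 𝒫ₙ^{mon}. -/

import Mathlib

open Matrix

/-- The `r mod k`-part of `p`: `p_{(r,k)}(t) := Σ_{j ≤ deg p, j mod k = r} a_j t^j`. -/
noncomputable def polyPart (p : Polynomial ℝ) (k r : ℕ) : Polynomial ℝ :=
  ∑ j ∈ Finset.range (p.natDegree + 1),
    if j % k = r then Polynomial.C (p.coeff j) * Polynomial.X ^ j else 0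

/-- `A` is a monomial (generalized permutation) matrix: `A = D P` with `D` an
invertible diagonal matrix and `P` a permutation matrix. -/
def IsMonomialMatrix {n : ℕ} (A : Matrix (Fin n) (Fin n) ℝ) : Prop :=
  ∃ (d : Fin n → ℝ) (σ : Equiv.Perm (Fin n)),
    (∀ i, d i ≠ 0) ∧ A = Matrix.diagonal d * σ.permMatrix ℝ

/-
Write A = D P_σ; the diagonal of D is positive because A ≥ 0. Fix i, j. Then (A^m)_{ij} vanishes unless
σ^m i = j, in which case it is the product of the weights met along the orbit of i. If k ≤ n
is the length of that orbit and c is the product of the weights around it, then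
(A^m)_{ij} = w_{m mod k} b^m with b = c^{1/k} > 0 and weights w_r ≥ 0, so grouping the terms
of p(A)_{ij} by m mod k gives p(A)_{ij} = Σ_{r<k} w_r p_{(r,k)}(b) ≥ 0.
-/

open Finset Polynomial

theorem Function.Periodic.prod_range_mul_add {M : Type*} [CommMonoid M] {f : ℕ → M} {k : ℕ}
    (hf : Function.Periodic f k) (q r : ℕ) :
    ∏ t ∈ range (k * q + r), f t = (∏ t ∈ range k, f t) ^ q * ∏ t ∈ range r, f t := by
  induction q with
  | zero => simp
  | succ q ih =>
    rw [show k * (q + 1) + r = k + (k * q + r) by ring, prod_range_add, pow_succ', mul_assoc, ← ih]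
    exact congrArg _ (prod_congr rfl fun x _ => by rw [add_comm, hf])

section MonomialMatrix

variable {ι R : Type*} [Fintype ι] [DecidableEq ι] [CommSemiring R]

theorem diagonal_mul_permMatrix_apply (d : ι → R) (σ : Equiv.Perm ι) (i j : ι) :
    (diagonal d * σ.permMatrix R) i j = if σ i = j then d i else 0 := by
  simp [Equiv.Perm.permMatrix, PEquiv.toMatrix_apply, eq_comm]

theorem diagonal_mul_permMatrix_pow_apply (d : ι → R) (σ : Equiv.Perm ι) (m : ℕ) (i j : ι) :
    ((diagonal d * σ.permMatrix R) ^ m) i j =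
      if (σ ^ m) i = j then ∏ t ∈ range m, d ((σ ^ t) i) else 0 := by
  induction m generalizing i with
  | zero => simp [one_apply]
  | succ m ih =>
    have hshift : ∀ t, (σ ^ (t + 1)) i = (σ ^ t) (σ i) := fun t => by
      rw [pow_succ, Equiv.Perm.mul_apply]
    rw [pow_succ', mul_apply, sum_eq_single (σ i), diagonal_mul_permMatrix_apply, if_pos rfl,
      ih, hshift, prod_range_succ', pow_zero, Equiv.Perm.one_apply]
    · simp only [← hshift, mul_ite, mul_zero, mul_comm]
    · intro l _ hl
      rw [diagonal_mul_permMatrix_apply, if_neg (Ne.symm hl), zero_mul]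
    · exact fun h => (h (mem_univ _)).elim

end MonomialMatrix

theorem exists_diagonal_mul_permMatrix_pow_apply_eq {ι : Type*} [Fintype ι] [DecidableEq ι]
    {d : ι → ℝ} (hd : ∀ l, 0 < d l) (σ : Equiv.Perm ι) (i j : ι) :
    ∃ b > 0, ∃ w : ℕ → ℝ, (∀ r, 0 ≤ w r) ∧
      ∀ m, ((diagonal d * σ.permMatrix ℝ) ^ m) i j = w (m % MulAction.period σ i) * b ^ m := by
  set k := MulAction.period σ i
  have hk : 0 < k := MulAction.period_pos_of_orderOf_pos (orderOf_pos σ) i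
  set c := ∏ t ∈ range k, d ((σ ^ t) i)
  have hc : 0 < c := prod_pos fun t _ => hd _
  set b := c ^ (k⁻¹ : ℝ)
  have hb : 0 < b := Real.rpow_pos_of_pos hc _
  have hbk : b ^ k = c := Real.rpow_inv_natCast_pow hc.le hk.ne'
  refine ⟨b, hb, fun r => if (σ ^ r) i = j then (∏ t ∈ range r, d ((σ ^ t) i)) / b ^ r else 0,
    fun r => ?_, fun m => ?_⟩
  · dsimp only
    split_ifs
    exacts [div_nonneg (prod_nonneg fun t _ => (hd _).le) (pow_nonneg hb.le r), le_rfl]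
  have hperiodic : Function.Periodic (fun t => d ((σ ^ t) i)) k := fun t => by
    change d ((σ ^ (t + k)) i) = d ((σ ^ t) i)
    rw [pow_add, Equiv.Perm.mul_apply, ← Equiv.Perm.smul_def (σ ^ k), MulAction.pow_period_smul]
  have horbit : (σ ^ (m % k)) i = (σ ^ m) i := by
    simpa only [Equiv.Perm.smul_def] using MulAction.pow_mod_period_smul m (m := σ) (a := i)
  rw [diagonal_mul_permMatrix_pow_apply, ← horbit]
  dsimp only
  split_ifs
  · have hprod := hperiodic.prod_range_mul_add (m / k) (m % k)
    have hbm : b ^ m = c ^ (m / k) * b ^ (m % k) := by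
      rw [← hbk, ← pow_mul, ← pow_add, Nat.div_add_mod]
    rw [Nat.div_add_mod] at hprod
    rw [hprod, hbm, mul_left_comm, div_mul_cancel₀ _ (pow_ne_zero _ hb.ne'), mul_comm]
  · rw [zero_mul]

theorem sum_coeff_mul_eq_sum_eval_polyPart (p : ℝ[X]) {k : ℕ} (hk : 0 < k) (w : ℕ → ℝ) (b : ℝ) :
    ∑ m ∈ range (p.natDegree + 1), p.coeff m * (w (m % k) * b ^ m) =
      ∑ r ∈ range k, w r * (polyPart p k r).eval b := by
  simp only [polyPart, eval_finsetSum, apply_ite (eval b), eval_mul, eval_C, eval_pow, eval_X,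
    eval_zero, mul_sum, mul_ite, mul_zero]
  rw [sum_comm]
  refine sum_congr rfl fun m _ => ?_
  rw [sum_ite_eq, if_pos (mem_range.mpr (Nat.mod_lt m hk))]
  ring

theorem mem_Pn_mon_of_polyPart_general (n : ℕ) (p : Polynomial ℝ)
    (h : ∀ k, 1 ≤ k → k ≤ n → ∀ r < k, ∀ a : ℝ, 0 ≤ a → 0 ≤ (polyPart p k r).eval a) :
    ∀ A : Matrix (Fin n) (Fin n) ℝ, IsMonomialMatrix A → (∀ i j, 0 ≤ A i j) →
      ∀ i j, 0 ≤ Polynomial.aeval A p i j := by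
  rintro A ⟨d, σ, hd, rfl⟩ hA i j
  have hdpos : ∀ l, 0 < d l := fun l => (hd l).symm.lt_of_le <| by
    simpa [diagonal_mul_permMatrix_apply] using hA l (σ l)
  have hk : 0 < MulAction.period σ i := MulAction.period_pos_of_orderOf_pos (orderOf_pos σ) i
  have hkn : MulAction.period σ i ≤ n :=
    (Function.minimalPeriod_le_card (f := (σ • ·)) (x := i)).trans_eq (Fintype.card_fin n)
  obtain ⟨b, hb, w, hw, hpow⟩ := exists_diagonal_mul_permMatrix_pow_apply_eq hdpos σ i j
  rw [aeval_eq_sum_range, Matrix.sum_apply]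
  simp only [Matrix.smul_apply, smul_eq_mul, hpow]
  rw [sum_coeff_mul_eq_sum_eval_polyPart p hk]
  exact sum_nonneg fun r hr => mul_nonneg (hw r) (h _ hk hkn r (mem_range.mp hr) b hb.le)

/-- Let `n ≥ 1` and `p ∈ ℝ[t]`. If `p_{(r,k)} ∈ 𝒫₁` for every
`k ∈ {1,…,n}` and every `r ∈ {0,…,k-1}`, then `p(A)` is entrywise nonnegative for every
entrywise nonnegative `n`-by-`n` monomial matrix `A`; that is, `p ∈ 𝒫ₙ^{mon}`. -/
theorem mem_Pn_mon_of_polyPart (n : ℕ) (hn : 0 < n) (p : Polynomial ℝ)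
    (h : ∀ k, 1 ≤ k → k ≤ n → ∀ r < k, ∀ a : ℝ, 0 ≤ a → 0 ≤ (polyPart p k r).eval a) :
    ∀ A : Matrix (Fin n) (Fin n) ℝ, IsMonomialMatrix A → (∀ i j, 0 ≤ A i j) →
      ∀ i j, 0 ≤ Polynomial.aeval A p i j :=
  mem_Pn_mon_of_polyPart_general n p h
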